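/- Let L1, L2 > 0 and Ω = (0,L1)×(0,L2). Let α1, α2, β1, β2 be continuously differentiable real-valued functions on the closed rectangle [0,L1]×[0,L2] with α1 ≥ c0 > 0 and α2 ≥ c0 > 0 everywhere, and set T1 = [[α1, β1], [β1, −α1]], T2 = [[α2, β2], [β2, −α2]], and ω0 = (1/2)·sup_{[0,L1]×[0,L2]} ((∂x α1 + ∂y α2)² + (∂x β1 + ∂y β2)²)^{1/2}. Let ū = (ū1, ū2) be continuously differentiable on the closed rectangle and satisfy the adjoint boundary conditions: β1·ū1 − α1·ū2 = 0 on {x=0}; α1·ū1 + β1·ū2 = 0 on {x=L1}; β2·ū1 − α2·ū2 = 0 on {y=0}; α2·ū1 + β2·ū2 = 0 on {y=L2}. Then ∫_Ω ū(x,y)ᵗ·( −∂x(T1(x,y)·ū(x,y)) − ∂y(T2(x,y)·ū(x,y)) ) dx dy ≥ −ω0·∫_Ω |ū(x,y)|² dx dy. -/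

import Mathlib

/-!
Write `Q(a, b, ū) = ūᵗ·[[a, b], [b, -a]]·ū`. The product rule gives, pointwise,
  `2 ūᵗ(-∂x(T1·ū) - ∂y(T2·ū))`
  `  = -(∂x Q(α1, β1, ū) + ∂y Q(α2, β2, ū)) - Q(∂x α1 + ∂y α2, ∂x β1 + ∂y β2, ū)`.
By Green's formula the divergence term integrates to the outward flux of
`(Q(α1, β1, ū), Q(α2, β2, ū))`, and the adjoint boundary conditions turn `Q(αi, βi, ū)` on
the edges into `±αi |ū|²`, with the signs that make this flux nonpositive. The last term is
bounded by Cauchy–Schwarz: `(ū1² - ū2², 2 ū1 ū2)` has length `|ū|²`, so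
`Q(a, b, ū) ≤ √(a² + b²) |ū|²`.
-/

open Set MeasureTheory

/-- The closed rectangle `[0,L1] × [0,L2]`. -/
def Rect (L1 L2 : ℝ) : Set (ℝ × ℝ) := Icc 0 L1 ×ˢ Icc 0 L2

/-- The open rectangle `Ω = (0,L1) × (0,L2)`. -/
def Om (L1 L2 : ℝ) : Set (ℝ × ℝ) := Ioo 0 L1 ×ˢ Ioo 0 L2

/-- The partial derivative `∂x f` on the closed rectangle. -/
noncomputable def pdx (L1 L2 : ℝ) (f : ℝ × ℝ → ℝ) (p : ℝ × ℝ) : ℝ :=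
  fderivWithin ℝ f (Rect L1 L2) p (1, 0)

/-- The partial derivative `∂y f` on the closed rectangle. -/
noncomputable def pdy (L1 L2 : ℝ) (f : ℝ × ℝ → ℝ) (p : ℝ × ℝ) : ℝ :=
  fderivWithin ℝ f (Rect L1 L2) p (0, 1)

/-- The quadratic form `ūᵗ·[[a, b], [b, -a]]·ū` at `ū = (x, y)`. -/
def tracelessForm (a b x y : ℝ) : ℝ := a * (x ^ 2 - y ^ 2) + 2 * b * (x * y)

theorem tracelessForm_add_tracelessForm (a a' b b' x y : ℝ) :
    tracelessForm a b x y + tracelessForm a' b' x y = tracelessForm (a + a') (b + b') x y := by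
  unfold tracelessForm; ring

theorem tracelessForm_le_sqrt_mul (a b x y : ℝ) :
    tracelessForm a b x y ≤ √(a ^ 2 + b ^ 2) * (x ^ 2 + y ^ 2) := by
  have hcs : tracelessForm a b x y ^ 2 ≤ (√(a ^ 2 + b ^ 2) * (x ^ 2 + y ^ 2)) ^ 2 := by
    rw [mul_pow, Real.sq_sqrt (by positivity)]
    unfold tracelessForm
    nlinarith [sq_nonneg (a * (2 * x * y) - b * (x ^ 2 - y ^ 2))]
  exact (abs_le_of_sq_le_sq' hcs (by positivity)).2

theorem tracelessForm_nonneg_of_sub_eq_zero {a b x y : ℝ} (ha : 0 ≤ a) (h : b * x - a * y = 0) :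
    0 ≤ tracelessForm a b x y := by
  have hQ : tracelessForm a b x y = a * (x ^ 2 + y ^ 2) := by
    unfold tracelessForm; linear_combination 2 * y * h
  rw [hQ]; positivity

theorem tracelessForm_nonpos_of_add_eq_zero {a b x y : ℝ} (ha : 0 ≤ a) (h : a * x + b * y = 0) :
    tracelessForm a b x y ≤ 0 := by
  have hQ : tracelessForm a b x y = -(a * (x ^ 2 + y ^ 2)) := by
    unfold tracelessForm; linear_combination 2 * x * h
  rw [hQ, neg_nonpos]; positivity

theorem ContinuousOn.tracelessForm {X : Type*} [TopologicalSpace X] {s : Set X}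
    {a b x y : X → ℝ} (ha : ContinuousOn a s) (hb : ContinuousOn b s)
    (hx : ContinuousOn x s) (hy : ContinuousOn y s) :
    ContinuousOn (fun q => tracelessForm (a q) (b q) (x q) (y q)) s :=
  (ha.mul ((hx.pow 2).sub (hy.pow 2))).add ((continuousOn_const.mul hb).mul (hx.mul hy))

theorem setIntegral_tracelessForm_le {X : Type*} [TopologicalSpace X] [T2Space X]
    [MeasurableSpace X] [OpensMeasurableSpace X] {μ : Measure X} [IsFiniteMeasureOnCompacts μ]
    {K : Set X} (hK : IsCompact K) {a b x y : X → ℝ} (ha : ContinuousOn a K)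
    (hb : ContinuousOn b K) (hx : ContinuousOn x K) (hy : ContinuousOn y K) :
    ∫ p in K, tracelessForm (a p) (b p) (x p) (y p) ∂μ
      ≤ sSup ((fun p => √(a p ^ 2 + b p ^ 2)) '' K) * ∫ p in K, (x p ^ 2 + y p ^ 2) ∂μ := by
  have hbdd : BddAbove ((fun p => √(a p ^ 2 + b p ^ 2)) '' K) :=
    hK.bddAbove_image (Real.continuous_sqrt.comp_continuousOn ((ha.pow 2).add (hb.pow 2)))
  rw [← integral_const_mul]
  refine setIntegral_mono_on ((ha.tracelessForm hb hx hy).integrableOn_compact hK)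
    ((((hx.pow 2).add (hy.pow 2)).integrableOn_compact hK).const_mul _) hK.measurableSet
    fun p hp => ?_
  calc tracelessForm (a p) (b p) (x p) (y p) ≤ √(a p ^ 2 + b p ^ 2) * (x p ^ 2 + y p ^ 2) :=
        tracelessForm_le_sqrt_mul _ _ _ _
    _ ≤ _ := by gcongr; exact le_csSup hbdd ⟨p, hp, rfl⟩

section Calculus

variable {E : Type*} [NormedAddCommGroup E] [NormedSpace ℝ E] {s : Set E} {p : E}
  {a b x y : E → ℝ}

theorem two_mul_fderivWithin_tracelessForm_apply (hs : UniqueDiffWithinAt ℝ s p)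
    (ha : DifferentiableWithinAt ℝ a s p) (hb : DifferentiableWithinAt ℝ b s p)
    (hx : DifferentiableWithinAt ℝ x s p) (hy : DifferentiableWithinAt ℝ y s p) (v : E) :
    2 * (x p * fderivWithin ℝ (fun q => a q * x q + b q * y q) s p v
      + y p * fderivWithin ℝ (fun q => b q * x q - a q * y q) s p v)
    = fderivWithin ℝ (fun q => tracelessForm (a q) (b q) (x q) (y q)) s p v
      + tracelessForm (fderivWithin ℝ a s p v) (fderivWithin ℝ b s p v) (x p) (y p) := by
  have ha' := ha.hasFDerivWithinAt
  have hb' := hb.hasFDerivWithinAt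
  have hx' := hx.hasFDerivWithinAt
  have hy' := hy.hasFDerivWithinAt
  unfold tracelessForm
  rw [((ha'.fun_mul hx').fun_add (hb'.fun_mul hy')).fderivWithin hs,
    ((hb'.fun_mul hx').fun_sub (ha'.fun_mul hy')).fderivWithin hs,
    ((ha'.fun_mul ((hx'.pow 2).fun_sub (hy'.pow 2))).fun_add
      ((hb'.const_mul 2).fun_mul (hx'.fun_mul hy'))).fderivWithin hs]
  simp only [add_apply, sub_apply, smul_apply, smul_eq_mul]
  ring

theorem ContDiffOn.tracelessForm {n : WithTop ℕ∞} (ha : ContDiffOn ℝ n a s)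
    (hb : ContDiffOn ℝ n b s) (hx : ContDiffOn ℝ n x s) (hy : ContDiffOn ℝ n y s) :
    ContDiffOn ℝ n (fun q => tracelessForm (a q) (b q) (x q) (y q)) s :=
  (ha.mul ((hx.pow 2).sub (hy.pow 2))).add ((contDiffOn_const.mul hb).mul (hx.mul hy))

end Calculus

section Rectangle

variable {L1 L2 : ℝ}

theorem rect_eq_Icc : Rect L1 L2 = Icc (0, 0) (L1, L2) := Icc_prod_Icc 0 L1 0 L2

theorem isCompact_rect : IsCompact (Rect L1 L2) := isCompact_Icc.prod isCompact_Icc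

theorem interior_rect : interior (Rect L1 L2) = Om L1 L2 := by
  rw [Rect, Om, interior_prod_eq, interior_Icc, interior_Icc]

theorem uniqueDiffOn_rect (hL1 : 0 < L1) (hL2 : 0 < L2) : UniqueDiffOn ℝ (Rect L1 L2) :=
  (uniqueDiffOn_Icc hL1).prod (uniqueDiffOn_Icc hL2)

theorem restrict_Om_eq_restrict_rect :
    (volume : Measure (ℝ × ℝ)).restrict (Om L1 L2) = volume.restrict (Rect L1 L2) := by
  rw [Om, Rect, Measure.volume_eq_prod, ← Measure.prod_restrict,
    Measure.restrict_congr_set Ioo_ae_eq_Icc, Measure.restrict_congr_set Ioo_ae_eq_Icc,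
    Measure.prod_restrict]

theorem ContDiffOn.continuousOn_pdx (hL1 : 0 < L1) (hL2 : 0 < L2) {f : ℝ × ℝ → ℝ}
    (hf : ContDiffOn ℝ 1 f (Rect L1 L2)) : ContinuousOn (pdx L1 L2 f) (Rect L1 L2) :=
  (hf.continuousOn_fderivWithin (uniqueDiffOn_rect hL1 hL2) le_rfl).clm_apply continuousOn_const

theorem ContDiffOn.continuousOn_pdy (hL1 : 0 < L1) (hL2 : 0 < L2) {f : ℝ × ℝ → ℝ}
    (hf : ContDiffOn ℝ 1 f (Rect L1 L2)) : ContinuousOn (pdy L1 L2 f) (Rect L1 L2) :=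
  (hf.continuousOn_fderivWithin (uniqueDiffOn_rect hL1 hL2) le_rfl).clm_apply continuousOn_const

theorem ContDiffOn.hasFDerivAt_of_mem_Om {f : ℝ × ℝ → ℝ} (hf : ContDiffOn ℝ 1 f (Rect L1 L2))
    {p : ℝ × ℝ} (hp : p ∈ Om L1 L2) :
    HasFDerivAt f (fderivWithin ℝ f (Rect L1 L2) p) p := by
  rw [← interior_rect] at hp
  exact ((hf.differentiableOn one_ne_zero p (interior_subset hp)).hasFDerivWithinAt).hasFDerivAt
    (mem_interior_iff_mem_nhds.1 hp)

theorem integrableOn_pdx_add_pdy (hL1 : 0 < L1) (hL2 : 0 < L2) {F G : ℝ × ℝ → ℝ}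
    (hF : ContDiffOn ℝ 1 F (Rect L1 L2)) (hG : ContDiffOn ℝ 1 G (Rect L1 L2)) :
    IntegrableOn (fun p => pdx L1 L2 F p + pdy L1 L2 G p) (Rect L1 L2) :=
  ((hF.continuousOn_pdx hL1 hL2).add (hG.continuousOn_pdy hL1 hL2)).integrableOn_compact
    isCompact_rect

theorem integral_pdx_add_pdy_rect (hL1 : 0 < L1) (hL2 : 0 < L2) {F G : ℝ × ℝ → ℝ}
    (hF : ContDiffOn ℝ 1 F (Rect L1 L2)) (hG : ContDiffOn ℝ 1 G (Rect L1 L2)) :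
    ∫ p in Rect L1 L2, (pdx L1 L2 F p + pdy L1 L2 G p)
      = (((∫ x in (0 : ℝ)..L1, G (x, L2)) - ∫ x in (0 : ℝ)..L1, G (x, 0))
          + ∫ y in (0 : ℝ)..L2, F (L1, y)) - ∫ y in (0 : ℝ)..L2, F (0, y) := by
  have hint := integrableOn_pdx_add_pdy hL1 hL2 hF hG
  have hdF : ∀ p ∈ Om L1 L2, HasFDerivAt F (fderivWithin ℝ F (Rect L1 L2) p) p :=
    fun _ => hF.hasFDerivAt_of_mem_Om
  have hdG : ∀ p ∈ Om L1 L2, HasFDerivAt G (fderivWithin ℝ G (Rect L1 L2) p) p :=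
    fun _ => hG.hasFDerivAt_of_mem_Om
  rw [rect_eq_Icc] at hF hG hint ⊢
  exact integral_divergence_prod_Icc_of_hasFDerivAt_off_countable_of_le F G _ _ (0, 0) (L1, L2)
    ⟨hL1.le, hL2.le⟩ ∅ countable_empty hF.continuousOn hG.continuousOn
    (fun p hp => hdF p hp.1) (fun p hp => hdG p hp.1) hint

theorem integral_pdx_add_pdy_rect_nonpos (hL1 : 0 < L1) (hL2 : 0 < L2) {F G : ℝ × ℝ → ℝ}
    (hF : ContDiffOn ℝ 1 F (Rect L1 L2)) (hG : ContDiffOn ℝ 1 G (Rect L1 L2))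
    (hW : ∀ y ∈ Icc (0 : ℝ) L2, 0 ≤ F (0, y)) (hE : ∀ y ∈ Icc (0 : ℝ) L2, F (L1, y) ≤ 0)
    (hS : ∀ x ∈ Icc (0 : ℝ) L1, 0 ≤ G (x, 0)) (hN : ∀ x ∈ Icc (0 : ℝ) L1, G (x, L2) ≤ 0) :
    ∫ p in Rect L1 L2, (pdx L1 L2 F p + pdy L1 L2 G p) ≤ 0 := by
  have integral_nonpos : ∀ {f : ℝ → ℝ} {L : ℝ}, 0 < L → (∀ t ∈ Icc 0 L, f t ≤ 0) →
      ∫ t in (0 : ℝ)..L, f t ≤ 0 := fun hL hf => by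
    simpa using intervalIntegral.integral_nonneg hL.le fun t ht => neg_nonneg.2 (hf t ht)
  rw [integral_pdx_add_pdy_rect hL1 hL2 hF hG]
  linarith [integral_nonpos hL1 hN, integral_nonpos hL2 hE,
    intervalIntegral.integral_nonneg (μ := volume) hL1.le hS,
    intervalIntegral.integral_nonneg (μ := volume) hL2.le hW]

end Rectangle

section AdjointOperator

variable {L1 L2 : ℝ} {α1 β1 α2 β2 u1 u2 : ℝ × ℝ → ℝ}

theorem adjoint_integrand_eq (hL1 : 0 < L1) (hL2 : 0 < L2)
    (hα1 : ContDiffOn ℝ 1 α1 (Rect L1 L2)) (hβ1 : ContDiffOn ℝ 1 β1 (Rect L1 L2))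
    (hα2 : ContDiffOn ℝ 1 α2 (Rect L1 L2)) (hβ2 : ContDiffOn ℝ 1 β2 (Rect L1 L2))
    (hu1 : ContDiffOn ℝ 1 u1 (Rect L1 L2)) (hu2 : ContDiffOn ℝ 1 u2 (Rect L1 L2))
    {p : ℝ × ℝ} (hp : p ∈ Rect L1 L2) :
    u1 p * (-(pdx L1 L2 (fun q => α1 q * u1 q + β1 q * u2 q) p)
        - pdy L1 L2 (fun q => α2 q * u1 q + β2 q * u2 q) p)
      + u2 p * (-(pdx L1 L2 (fun q => β1 q * u1 q - α1 q * u2 q) p)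
        - pdy L1 L2 (fun q => β2 q * u1 q - α2 q * u2 q) p)
    = -((pdx L1 L2 (fun q => tracelessForm (α1 q) (β1 q) (u1 q) (u2 q)) p
          + pdy L1 L2 (fun q => tracelessForm (α2 q) (β2 q) (u1 q) (u2 q)) p)
        + tracelessForm (pdx L1 L2 α1 p + pdy L1 L2 α2 p) (pdx L1 L2 β1 p + pdy L1 L2 β2 p)
            (u1 p) (u2 p)) / 2 := by
  have hd : ∀ f : ℝ × ℝ → ℝ, ContDiffOn ℝ 1 f (Rect L1 L2) →
      DifferentiableWithinAt ℝ f (Rect L1 L2) p :=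
    fun f hf => hf.differentiableOn one_ne_zero p hp
  have hR := uniqueDiffOn_rect hL1 hL2 p hp
  have hx := two_mul_fderivWithin_tracelessForm_apply hR
    (hd _ hα1) (hd _ hβ1) (hd _ hu1) (hd _ hu2) (1, 0)
  have hy := two_mul_fderivWithin_tracelessForm_apply hR
    (hd _ hα2) (hd _ hβ2) (hd _ hu1) (hd _ hu2) (0, 1)
  rw [← tracelessForm_add_tracelessForm]
  unfold pdx pdy
  linarith

theorem integral_pdx_add_pdy_tracelessForm_nonpos (hL1 : 0 < L1) (hL2 : 0 < L2)
    (hα1 : ContDiffOn ℝ 1 α1 (Rect L1 L2)) (hβ1 : ContDiffOn ℝ 1 β1 (Rect L1 L2))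
    (hα2 : ContDiffOn ℝ 1 α2 (Rect L1 L2)) (hβ2 : ContDiffOn ℝ 1 β2 (Rect L1 L2))
    (hu1 : ContDiffOn ℝ 1 u1 (Rect L1 L2)) (hu2 : ContDiffOn ℝ 1 u2 (Rect L1 L2))
    (hα1₀ : ∀ p ∈ Rect L1 L2, 0 ≤ α1 p) (hα2₀ : ∀ p ∈ Rect L1 L2, 0 ≤ α2 p)
    (hW : ∀ y ∈ Icc (0 : ℝ) L2, β1 (0, y) * u1 (0, y) - α1 (0, y) * u2 (0, y) = 0)
    (hE : ∀ y ∈ Icc (0 : ℝ) L2, α1 (L1, y) * u1 (L1, y) + β1 (L1, y) * u2 (L1, y) = 0)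
    (hS : ∀ x ∈ Icc (0 : ℝ) L1, β2 (x, 0) * u1 (x, 0) - α2 (x, 0) * u2 (x, 0) = 0)
    (hN : ∀ x ∈ Icc (0 : ℝ) L1, α2 (x, L2) * u1 (x, L2) + β2 (x, L2) * u2 (x, L2) = 0) :
    ∫ p in Rect L1 L2, (pdx L1 L2 (fun q => tracelessForm (α1 q) (β1 q) (u1 q) (u2 q)) p
      + pdy L1 L2 (fun q => tracelessForm (α2 q) (β2 q) (u1 q) (u2 q)) p) ≤ 0 :=
  integral_pdx_add_pdy_rect_nonpos hL1 hL2 (hα1.tracelessForm hβ1 hu1 hu2)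
    (hα2.tracelessForm hβ2 hu1 hu2)
    (fun y hy => tracelessForm_nonneg_of_sub_eq_zero
      (hα1₀ _ ⟨left_mem_Icc.2 hL1.le, hy⟩) (hW y hy))
    (fun y hy => tracelessForm_nonpos_of_add_eq_zero
      (hα1₀ _ ⟨right_mem_Icc.2 hL1.le, hy⟩) (hE y hy))
    (fun x hx => tracelessForm_nonneg_of_sub_eq_zero
      (hα2₀ _ ⟨hx, left_mem_Icc.2 hL2.le⟩) (hS x hx))
    (fun x hx => tracelessForm_nonpos_of_add_eq_zero
      (hα2₀ _ ⟨hx, right_mem_Icc.2 hL2.le⟩) (hN x hx))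

end AdjointOperator

/-- Quasi-positivity of the formal adjoint `𝒯₂* ū = -∂x(T1·ū) - ∂y(T2·ū)` of the
variable-coefficient elliptic-mode operator, on pairs `ū = (ū1, ū2)` satisfying the
adjoint boundary conditions: `∫_Ω ūᵗ·(-∂x(T1·ū) - ∂y(T2·ū)) ≥ -ω0·∫_Ω |ū|²` where
`ω0 = (1/2)·sup √((∂x α1 + ∂y α2)² + (∂x β1 + ∂y β2)²)`. -/
theorem stmt10 (L1 L2 c0 : ℝ) (hL1 : 0 < L1) (hL2 : 0 < L2) (hc0 : 0 < c0)
    (α1 β1 α2 β2 : ℝ × ℝ → ℝ)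
    (hα1 : ContDiffOn ℝ 1 α1 (Rect L1 L2)) (hβ1 : ContDiffOn ℝ 1 β1 (Rect L1 L2))
    (hα2 : ContDiffOn ℝ 1 α2 (Rect L1 L2)) (hβ2 : ContDiffOn ℝ 1 β2 (Rect L1 L2))
    (hα1c : ∀ p ∈ Rect L1 L2, c0 ≤ α1 p) (hα2c : ∀ p ∈ Rect L1 L2, c0 ≤ α2 p)
    (ω0 : ℝ)
    (hω0 : ω0 = (1 / 2) * sSup ((fun p =>
      Real.sqrt ((pdx L1 L2 α1 p + pdy L1 L2 α2 p) ^ 2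
        + (pdx L1 L2 β1 p + pdy L1 L2 β2 p) ^ 2)) '' Rect L1 L2))
    (u1 u2 : ℝ × ℝ → ℝ)
    (hu1 : ContDiffOn ℝ 1 u1 (Rect L1 L2)) (hu2 : ContDiffOn ℝ 1 u2 (Rect L1 L2))
    (hW : ∀ y ∈ Icc (0 : ℝ) L2, β1 (0, y) * u1 (0, y) - α1 (0, y) * u2 (0, y) = 0)
    (hE : ∀ y ∈ Icc (0 : ℝ) L2, α1 (L1, y) * u1 (L1, y) + β1 (L1, y) * u2 (L1, y) = 0)
    (hS : ∀ x ∈ Icc (0 : ℝ) L1, β2 (x, 0) * u1 (x, 0) - α2 (x, 0) * u2 (x, 0) = 0)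
    (hN : ∀ x ∈ Icc (0 : ℝ) L1, α2 (x, L2) * u1 (x, L2) + β2 (x, L2) * u2 (x, L2) = 0) :
    -ω0 * (∫ p in Om L1 L2, ((u1 p) ^ 2 + (u2 p) ^ 2))
      ≤ ∫ p in Om L1 L2,
          (u1 p * (-(pdx L1 L2 (fun q => α1 q * u1 q + β1 q * u2 q) p)
              - pdy L1 L2 (fun q => α2 q * u1 q + β2 q * u2 q) p)
            + u2 p * (-(pdx L1 L2 (fun q => β1 q * u1 q - α1 q * u2 q) p)
              - pdy L1 L2 (fun q => β2 q * u1 q - α2 q * u2 q) p)) := by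
  have hα1₀ : ∀ p ∈ Rect L1 L2, 0 ≤ α1 p := fun p hp => hc0.le.trans (hα1c p hp)
  have hα2₀ : ∀ p ∈ Rect L1 L2, 0 ≤ α2 p := fun p hp => hc0.le.trans (hα2c p hp)
  have hflux := integral_pdx_add_pdy_tracelessForm_nonpos hL1 hL2 hα1 hβ1 hα2 hβ2 hu1 hu2
    hα1₀ hα2₀ hW hE hS hN
  have hflux_int := integrableOn_pdx_add_pdy hL1 hL2 (hα1.tracelessForm hβ1 hu1 hu2)
    (hα2.tracelessForm hβ2 hu1 hu2)
  have ha : ContinuousOn (fun p => pdx L1 L2 α1 p + pdy L1 L2 α2 p) (Rect L1 L2) :=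
    (hα1.continuousOn_pdx hL1 hL2).add (hα2.continuousOn_pdy hL1 hL2)
  have hb : ContinuousOn (fun p => pdx L1 L2 β1 p + pdy L1 L2 β2 p) (Rect L1 L2) :=
    (hβ1.continuousOn_pdx hL1 hL2).add (hβ2.continuousOn_pdy hL1 hL2)
  have hQ := setIntegral_tracelessForm_le (μ := volume) isCompact_rect ha hb hu1.continuousOn
    hu2.continuousOn
  have hQ_int := (ha.tracelessForm hb hu1.continuousOn hu2.continuousOn).integrableOn_compact
    (μ := volume) isCompact_rect
  rw [restrict_Om_eq_restrict_rect, setIntegral_congr_fun isCompact_rect.measurableSet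
      fun p hp => adjoint_integrand_eq hL1 hL2 hα1 hβ1 hα2 hβ2 hu1 hu2 hp,
    integral_div, integral_neg, integral_add hflux_int hQ_int, hω0]
  linarith
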